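/- Let X be a finite set, μ and d as above, and M*(d) the maximal size of a distance-d code. Then M*(d) = 1 / min_{P} Pr[min(μ(X̂,X), μ(X,X̂)) < d], where the minimum is over all probability distributions P on X and X̂, X are i.i.d. with law P. -/

import Mathlib

/-!
Write `Q p = ∑ x, ∑ y, [x, y confusable] p x p y`; every letter is confusable with itself.
The uniform distribution on a maximum code gives `Q = 1 / M*`, since only diagonal pairs of
the code are confusable. Conversely, if two confusable letters `u ≠ v` both carry mass, then
`Q (e_u - e_v) = 0`, so `Q` is affine on the line through `p` in direction `e_u - e_v`; moving all
the mass of `v` onto `u`, or of `u` onto `v`, therefore does not increase `Q`, and it shrinks the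
support. Iterating, one reaches a distribution supported on a code `S`, where
`Q = ∑ x, p x ^ 2 ≥ 1 / |S| ≥ 1 / M*` by Cauchy–Schwarz.
-/

open Finset Matrix

section

variable {X : Type*} [Fintype X]

lemma dotProduct_mulVec_add_smul {R : Type*} [CommRing R] {A : Matrix X X R} (hA : A.IsSymm)
    (p e : X → R) (t : R) (he : e ⬝ᵥ A *ᵥ e = 0) :
    (p + t • e) ⬝ᵥ A *ᵥ (p + t • e) = p ⬝ᵥ A *ᵥ p + 2 * t * (p ⬝ᵥ A *ᵥ e) := by
  have hcomm : e ⬝ᵥ A *ᵥ p = p ⬝ᵥ A *ᵥ e := by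
    rw [dotProduct_mulVec, ← mulVec_transpose, hA.eq, dotProduct_comm]
  simp only [mulVec_add, mulVec_smul, add_dotProduct, dotProduct_add, smul_dotProduct,
    dotProduct_smul, smul_eq_mul, he, hcomm]
  ring

lemma one_le_card_support_mul_sum_sq {p : X → ℝ} (hp : p ∈ stdSimplex ℝ X) :
    1 ≤ #{x | p x ≠ 0} * ∑ x, p x ^ 2 := by
  have hsum : ∑ x ∈ {x | p x ≠ 0}, p x = 1 := by rw [sum_filter_ne_zero, hp.2]
  have hsq : ∑ x ∈ {x | p x ≠ 0}, p x ^ 2 = ∑ x, p x ^ 2 :=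
    sum_filter_of_ne fun x _ h => by simpa using h
  simpa [hsum, hsq] using sq_sum_le_card_mul_sum_sq (s := {x | p x ≠ 0}) (f := p)

section Codes

variable (P : X → X → Prop)

def codeSizes : Set ℕ := {m | ∃ C : Finset X, #C = m ∧ (C : Set X).Pairwise P}

lemma bddAbove_codeSizes : BddAbove (codeSizes P) :=
  ⟨Fintype.card X, by rintro _ ⟨C, rfl, -⟩; exact card_le_univ C⟩

lemma card_le_sSup_codeSizes {C : Finset X} (hC : (C : Set X).Pairwise P) :
    #C ≤ sSup (codeSizes P) :=
  le_csSup (bddAbove_codeSizes P) ⟨C, rfl, hC⟩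

lemma exists_card_eq_sSup_codeSizes :
    ∃ C : Finset X, (C : Set X).Pairwise P ∧ #C = sSup (codeSizes P) :=
  let ⟨C, hC, hP⟩ := Nat.sSup_mem (s := codeSizes P) ⟨0, ∅, rfl, by simp⟩ (bddAbove_codeSizes P)
  ⟨C, hP, hC⟩

end Codes

section Distributions

variable [DecidableEq X]

noncomputable def uniformOn (C : Finset X) : X → ℝ := fun x => if x ∈ C then (#C : ℝ)⁻¹ else 0

lemma uniformOn_mem_stdSimplex {C : Finset X} (hC : C.Nonempty) : uniformOn C ∈ stdSimplex ℝ X :=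
  ⟨fun x => by unfold uniformOn; positivity, by simp [uniformOn, hC.card_ne_zero]⟩

omit [Fintype X] in
lemma support_uniformOn_subset (C : Finset X) : Function.support (uniformOn C) ⊆ C := by
  intro x hx
  by_contra hxC
  exact hx (if_neg hxC)

lemma sum_uniformOn_sq (C : Finset X) : ∑ x, uniformOn C x ^ 2 = (#C : ℝ)⁻¹ := by
  have hterm : ∀ x, uniformOn C x ^ 2 = if x ∈ C then ((#C : ℝ) ^ 2)⁻¹ else 0 := fun x => by
    unfold uniformOn; split_ifs <;> simp
  rw [sum_congr rfl fun x _ => hterm x, sum_ite_mem, univ_inter, sum_const, nsmul_eq_mul, sq,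
    mul_inv, ← mul_assoc]
  rcases eq_or_ne (#C : ℝ) 0 with h | h
  · simp [h]
  · rw [mul_inv_cancel₀ h, one_mul]

def moveMass (p : X → ℝ) (v u : X) : X → ℝ := p + p v • (Pi.single u 1 - Pi.single v 1)

lemma moveMass_mem_stdSimplex {p : X → ℝ} (hp : p ∈ stdSimplex ℝ X) {u v : X} (huv : u ≠ v) :
    moveMass p v u ∈ stdSimplex ℝ X := by
  refine ⟨fun x => ?_, ?_⟩
  · rcases eq_or_ne x v with rfl | hxv
    · simp [moveMass, huv]
    · simpa [moveMass, Pi.single_apply, hxv] using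
        add_nonneg (hp.1 x) (by split_ifs <;> simp [hp.1 v] : 0 ≤ if x = u then p v else 0)
  · simp [moveMass, sum_add_distrib, ← mul_sum, hp.2]

lemma card_support_moveMass_lt {p : X → ℝ} {u v : X} (huv : u ≠ v) (hu : p u ≠ 0)
    (hv : p v ≠ 0) : #{x | moveMass p v u x ≠ 0} < #{x | p x ≠ 0} := by
  refine (card_le_card fun x hx => ?_).trans_lt
    (card_erase_lt_of_mem (s := {x | p x ≠ 0}) (by simpa using hv))
  simp only [mem_filter, mem_univ, true_and, mem_erase] at hx ⊢
  rcases eq_or_ne x v with rfl | hxv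
  · simp [moveMass, huv] at hx
  rcases eq_or_ne x u with rfl | hxu
  · exact ⟨hxv, hu⟩
  · simpa [moveMass, hxv, hxu] using hx

end Distributions

section Confusion

variable (r : X → X → Prop) [DecidableRel r]

def confusionProb (p : X → ℝ) : ℝ := ∑ x, ∑ y, if r x y then p x * p y else 0

def confusionMatrix : Matrix X X ℝ := Matrix.of fun x y => if r x y then 1 else 0

variable {r}

lemma confusionProb_eq_dotProduct (p : X → ℝ) :
    confusionProb r p = p ⬝ᵥ confusionMatrix r *ᵥ p := by
  simp [confusionProb, dotProduct, mulVec, confusionMatrix, mul_sum]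

omit [Fintype X] in
lemma confusionMatrix_isSymm [Std.Symm r] : (confusionMatrix r).IsSymm :=
  Matrix.IsSymm.ext fun i j => by simp [confusionMatrix, Std.Symm.iff (r := r) j i]

variable [Std.Refl r]

lemma confusionProb_eq_sum_sq {p : X → ℝ}
    (hp : (Function.support p).Pairwise fun u v => ¬ r u v) :
    confusionProb r p = ∑ x, p x ^ 2 := by
  refine sum_congr rfl fun x _ => ?_
  rw [sum_eq_single x, if_pos (refl_of r x), sq]
  · intro y _ hyx
    by_cases hxy : r x y
    · by_contra hne
      exact hp (left_ne_zero_of_mul (by simpa [hxy] using hne))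
        (right_ne_zero_of_mul (by simpa [hxy] using hne)) (Ne.symm hyx) hxy
    · simp [hxy]
  · simp

lemma confusionProb_uniformOn [DecidableEq X] {C : Finset X}
    (hC : (C : Set X).Pairwise fun u v => ¬ r u v) :
    confusionProb r (uniformOn C) = (#C : ℝ)⁻¹ := by
  rw [confusionProb_eq_sum_sq (hC.mono (support_uniformOn_subset C)), sum_uniformOn_sq]

variable [Std.Symm r] [DecidableEq X]

lemma single_sub_single_dotProduct_confusionMatrix {u v : X} (h : r u v) :
    (Pi.single u 1 - Pi.single v 1) ⬝ᵥ
      confusionMatrix r *ᵥ (Pi.single u 1 - Pi.single v 1) = 0 := by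
  simp [mulVec_sub, sub_dotProduct, confusionMatrix, refl_of r, h, symm_of r h]

lemma mul_confusionProb_moveMass_add_mul {p : X → ℝ} {u v : X} (h : r u v) :
    p u * confusionProb r (moveMass p v u) + p v * confusionProb r (moveMass p u v) =
      (p u + p v) * confusionProb r p := by
  have hvu : (Pi.single v 1 - Pi.single u 1 : X → ℝ) = -(Pi.single u 1 - Pi.single v 1) :=
    (neg_sub _ _).symm
  rw [confusionProb_eq_dotProduct, confusionProb_eq_dotProduct, confusionProb_eq_dotProduct,
    moveMass, moveMass,
    dotProduct_mulVec_add_smul confusionMatrix_isSymm _ _ _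
      (single_sub_single_dotProduct_confusionMatrix h),
    dotProduct_mulVec_add_smul confusionMatrix_isSymm _ _ _
      (single_sub_single_dotProduct_confusionMatrix (symm_of r h)), hvu, mulVec_neg,
    dotProduct_neg]
  ring

lemma exists_confusionProb_le_of_not_pairwise {p : X → ℝ} (hp : p ∈ stdSimplex ℝ X)
    (hcode : ¬ (Function.support p).Pairwise fun u v => ¬ r u v) :
    ∃ q ∈ stdSimplex ℝ X, #{x | q x ≠ 0} < #{x | p x ≠ 0} ∧
      confusionProb r q ≤ confusionProb r p := by
  obtain ⟨u, hu, v, hv, huv, h⟩ : ∃ u, p u ≠ 0 ∧ ∃ v, p v ≠ 0 ∧ u ≠ v ∧ r u v := by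
    simpa [Set.Pairwise] using hcode
  have hu' : 0 < p u := (hp.1 u).lt_of_ne' hu
  have hv' : 0 < p v := (hp.1 v).lt_of_ne' hv
  by_cases hle : confusionProb r (moveMass p v u) ≤ confusionProb r p
  · exact ⟨_, moveMass_mem_stdSimplex hp huv, card_support_moveMass_lt huv hu hv, hle⟩
  · refine ⟨_, moveMass_mem_stdSimplex hp huv.symm, card_support_moveMass_lt huv.symm hv hu, ?_⟩
    nlinarith [mul_confusionProb_moveMass_add_mul (r := r) (p := p) h]

theorem exists_pairwise_support_confusionProb_le {p : X → ℝ} (hp : p ∈ stdSimplex ℝ X) :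
    ∃ q ∈ stdSimplex ℝ X, (Function.support q).Pairwise (fun u v => ¬ r u v) ∧
      confusionProb r q ≤ confusionProb r p := by
  by_cases hcode : (Function.support p).Pairwise fun u v => ¬ r u v
  · exact ⟨p, hp, hcode, le_rfl⟩
  obtain ⟨p', hp', hlt, hle⟩ := exists_confusionProb_le_of_not_pairwise hp hcode
  obtain ⟨q, hq, hqcode, hqle⟩ := exists_pairwise_support_confusionProb_le hp'
  exact ⟨q, hq, hqcode, hqle.trans hle⟩
termination_by #{x | p x ≠ 0}

theorem one_le_mul_confusionProb {M : ℕ}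
    (hM : ∀ C : Finset X, (C : Set X).Pairwise (fun u v => ¬ r u v) → #C ≤ M)
    {p : X → ℝ} (hp : p ∈ stdSimplex ℝ X) : 1 ≤ M * confusionProb r p := by
  obtain ⟨q, hq, hcode, hle⟩ := exists_pairwise_support_confusionProb_le (r := r) hp
  have hcard : #{x | q x ≠ 0} ≤ M := hM _ (by simpa [Function.support] using hcode)
  calc 1 ≤ #{x | q x ≠ 0} * ∑ x, q x ^ 2 := one_le_card_support_mul_sum_sq hq
    _ ≤ M * ∑ x, q x ^ 2 := by gcongr
    _ = M * confusionProb r q := by rw [confusionProb_eq_sum_sq hcode]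
    _ ≤ M * confusionProb r p := by gcongr

end Confusion

end

theorem stmt_3 {X : Type*} [Fintype X] [Nonempty X] [DecidableEq X]
    (μ : X → X → ℝ)
    (hμ : ∀ u : X, μ u u = ⨅ ab : X × X, μ ab.1 ab.2)
    (d : ℝ) (hd : (⨅ ab : X × X, μ ab.1 ab.2) < d)
    (Mstar : ℕ)
    (hM : Mstar = sSup {m : ℕ | ∃ C : Finset X, C.card = m ∧
      ∀ u ∈ C, ∀ v ∈ C, u ≠ v → d ≤ min (μ u v) (μ v u)}) :
    (Mstar : ℝ) =
      1 / sInf {q : ℝ | ∃ p : X → ℝ, (∀ x, 0 ≤ p x) ∧ (∑ x, p x = 1) ∧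
        q = ∑ x : X, ∑ y : X, (if min (μ x y) (μ y x) < d then p x * p y else 0)} := by
  let r : X → X → Prop := fun x y => min (μ x y) (μ y x) < d
  have : Std.Refl r := ⟨fun x => by simp only [r, min_self, hμ, hd]⟩
  have : Std.Symm r := ⟨fun x y h => by simpa only [r, min_comm] using h⟩
  have pairwise_iff : ∀ C : Finset X, ((C : Set X).Pairwise fun u v => d ≤ min (μ u v) (μ v u)) ↔
      (C : Set X).Pairwise fun u v => ¬ r u v := by
    simp only [r, not_lt, implies_true]
  change Mstar = sSup (codeSizes fun u v => d ≤ min (μ u v) (μ v u)) at hM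
  obtain ⟨C, hC, hCcard⟩ := exists_card_eq_sSup_codeSizes fun u v => d ≤ min (μ u v) (μ v u)
  rw [← hM] at hCcard
  have hMpos : 0 < Mstar := hM ▸ card_le_sSup_codeSizes _ (C := {Classical.arbitrary X}) (by simp)
  rw [IsLeast.csInf_eq (a := (Mstar : ℝ)⁻¹) ?_, one_div, inv_inv]
  obtain ⟨hC0, hC1⟩ := uniformOn_mem_stdSimplex (card_pos.mp (hCcard ▸ hMpos))
  refine ⟨⟨uniformOn C, hC0, hC1, ?_⟩, ?_⟩
  · rw [← hCcard]
    exact (confusionProb_uniformOn ((pairwise_iff C).mp hC)).symm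
  · rintro _ ⟨p, hp0, hp1, rfl⟩
    rw [inv_le_iff_one_le_mul₀' (by exact_mod_cast hMpos)]
    exact one_le_mul_confusionProb
      (fun C' hC' => hM ▸ card_le_sSup_codeSizes _ ((pairwise_iff C').mpr hC')) ⟨hp0, hp1⟩
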